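/- arXiv:2107.04315 — 7 statements merged into one kernel-verified Lean document; each statement's English description precedes it below -/
import Mathlib

section
/- Let p(X) ∈ F[X] be any polynomial. Then Σ_{x ∈ H} p(x) = 0 if and only if there exists a polynomial U(X) ∈ F[X] such that U(g·X) − U(X) ≡ p(X) (mod X^n − 1), i.e. the polynomial U(g·X) − U(X) − p(X) is divisible by X^n − 1. -/
/-!
Write `r = p mod (X^n - 1)`; since `X^n - 1` vanishes on `H`, `∑_{x ∈ H} p(x) = ∑_{x ∈ H} r(x)`,
and as `deg r < n` orthogonality of the characters `x ↦ x^j` of `H` gives `∑_{x ∈ H} r(x) = n·r₀`.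
If `r₀ = 0`, each remaining monomial `r_j X^j` (`0 < j < n`, so `g^j ≠ 1`) is the coboundary of
`r_j/(g^j - 1) · X^j`, because `U(gX) - U(X)` multiplies the `j`-th coefficient of `U` by `g^j - 1`.
Conversely, a coboundary `U(gX) - U(X)` telescopes to `U(g^n) - U(1) = 0` along `H`.
-/

open Polynomial Finset

theorem Polynomial.coeff_comp_C_mul_X {R : Type*} [CommSemiring R] (p : R[X]) (a : R) (j : ℕ) :
    (p.comp (C a * X)).coeff j = a ^ j * p.coeff j := by
  induction p using Polynomial.induction_on' with
  | add p q hp hq => simp [add_comp, hp, hq, mul_add]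
  | monomial k b =>
    simp only [monomial_comp, mul_pow, ← C_pow, ← mul_assoc, ← C_mul, coeff_C_mul_X_pow,
      coeff_monomial]
    split_ifs <;> simp_all [mul_comm]

theorem Polynomial.exists_comp_C_mul_X_sub_eq {F : Type*} [Field F] {g : F} {r : F[X]}
    (hr : ∀ j ∈ r.support, g ^ j ≠ 1) : ∃ U : F[X], U.comp (C g * X) - U = r := by
  refine ⟨∑ j ∈ r.support, monomial j (r.coeff j / (g ^ j - 1)), ?_⟩
  ext j
  simp only [coeff_sub, coeff_comp_C_mul_X, finsetSum_coeff, coeff_monomial, sum_ite_eq',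
    ← sub_one_mul]
  split_ifs with hj
  · exact mul_div_cancel₀ _ (sub_ne_zero.2 (hr j hj))
  · simpa using (notMem_support_iff.1 hj).symm

theorem Polynomial.natDegree_modByMonic_X_pow_sub_one_lt {R : Type*} [CommRing R] [Nontrivial R]
    {n : ℕ} (hn : n ≠ 0) (p : R[X]) : (p %ₘ (X ^ n - 1)).natDegree < n := by
  have hmonic : (X ^ n - 1 : R[X]).Monic := by simpa using monic_X_pow_sub_C (1 : R) hn
  have hdeg : (X ^ n - 1 : R[X]).natDegree = n := by
    simpa using natDegree_X_pow_sub_C (n := n) (r := (1 : R))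
  have hlt := natDegree_modByMonic_lt p hmonic fun h => hn (by simpa [h] using hdeg.symm)
  rwa [hdeg] at hlt

theorem Polynomial.isRoot_X_pow_sub_one_of_pow_eq_one {R : Type*} [CommRing R] {x : R} {n : ℕ}
    (h : x ^ n = 1) : (X ^ n - 1 : R[X]).IsRoot x := by
  simp [h]

theorem Polynomial.sum_range_eval_pow_eq_zero_of_dvd {R : Type*} [CommRing R] {g : R} {n : ℕ}
    (hgn : g ^ n = 1) {U p : R[X]} (h : (X ^ n - 1 : R[X]) ∣ U.comp (C g * X) - U - p) :
    ∑ i ∈ range n, p.eval (g ^ i) = 0 := by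
  have step (i : ℕ) : p.eval (g ^ i) = U.eval (g ^ (i + 1)) - U.eval (g ^ i) := by
    have hroot : (X ^ n - 1 : R[X]).IsRoot (g ^ i) :=
      isRoot_X_pow_sub_one_of_pow_eq_one (by rw [pow_right_comm, hgn, one_pow])
    have := eval_eq_zero_of_dvd_of_eval_eq_zero h hroot
    simp only [eval_sub, eval_comp, eval_mul, eval_C, eval_X] at this
    rw [pow_succ']
    linear_combination -this
  rw [sum_congr rfl fun i _ => step i, sum_range_sub (fun i => U.eval (g ^ i)), hgn, pow_zero,
    sub_self]

namespace IsPrimitiveRoot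

variable {R : Type*} [CommRing R] [IsDomain R] {g : R} {n : ℕ}

theorem geom_sum_pow_eq_zero (hg : IsPrimitiveRoot g n) {j : ℕ} (hj0 : 0 < j) (hjn : j < n) :
    ∑ i ∈ range n, (g ^ j) ^ i = 0 := by
  have hgj : g ^ j - 1 ≠ 0 := sub_ne_zero.2 (hg.pow_ne_one_of_pos_of_lt hj0.ne' hjn)
  refine (mul_eq_zero.1 ?_).resolve_right hgj
  rw [geom_sum_mul, pow_right_comm, hg.pow_eq_one, one_pow, sub_self]

theorem sum_eval_pow_eq_mul_coeff_zero (hg : IsPrimitiveRoot g n) {r : R[X]}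
    (hr : r.natDegree < n) : ∑ i ∈ range n, r.eval (g ^ i) = n * r.coeff 0 := by
  have hn : 0 < n := hr.trans_le' (Nat.zero_le _)
  calc ∑ i ∈ range n, r.eval (g ^ i)
      = ∑ j ∈ range n, r.coeff j * ∑ i ∈ range n, (g ^ j) ^ i := by
        simp only [eval_eq_sum_range' hr, mul_sum, ← pow_mul]
        rw [sum_comm]
        simp only [Nat.mul_comm]
    _ = n * r.coeff 0 := by
        rw [sum_eq_single_of_mem 0 (mem_range.2 hn)]
        · simp [mul_comm]
        · intro j hj hj0
          rw [hg.geom_sum_pow_eq_zero (Nat.pos_of_ne_zero hj0) (mem_range.1 hj), mul_zero]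

theorem sum_eval_pow_eq_mul_coeff_zero_modByMonic (hg : IsPrimitiveRoot g n) (hn : n ≠ 0)
    (p : R[X]) :
    ∑ i ∈ range n, p.eval (g ^ i) = n * (p %ₘ (X ^ n - 1)).coeff 0 := by
  have hroot (i : ℕ) : (X ^ n - 1 : R[X]).IsRoot (g ^ i) :=
    isRoot_X_pow_sub_one_of_pow_eq_one (by rw [pow_right_comm, hg.pow_eq_one, one_pow])
  rw [← hg.sum_eval_pow_eq_mul_coeff_zero (natDegree_modByMonic_X_pow_sub_one_lt hn p)]
  exact sum_congr rfl fun i _ => (aeval_modByMonic_eq_self_of_root (hroot i)).symm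

end IsPrimitiveRoot

/-- **Coboundary characterization of the sumcheck.**
Let `F` be a field, `n` a positive integer whose image in `F` is nonzero, and `g` a primitive
`n`-th root of unity (so `H = {g^0, …, g^(n-1)}` is the zero set of `X^n - 1`).
For any polynomial `p`, `∑_{x ∈ H} p(x) = 0` iff there exists a polynomial `U` with
`U(g·X) - U(X) ≡ p(X) (mod X^n - 1)`. -/
theorem coboundary_sumcheck {F : Type*} [Field F] (n : ℕ) (hn : (n : F) ≠ 0)
    (g : F) (hg : IsPrimitiveRoot g n) (p : F[X]) :
    (∑ i ∈ Finset.range n, p.eval (g ^ i)) = 0 ↔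
      ∃ U : F[X], (X ^ n - 1 : F[X]) ∣ (U.comp (C g * X) - U - p) := by
  have hn0 : n ≠ 0 := by rintro rfl; simp at hn
  refine ⟨fun hsum => ?_, fun ⟨U, hU⟩ => sum_range_eval_pow_eq_zero_of_dvd hg.pow_eq_one hU⟩
  set r := p %ₘ (X ^ n - 1)
  have hr0 : r.coeff 0 = 0 := by
    rw [hg.sum_eval_pow_eq_mul_coeff_zero_modByMonic hn0] at hsum
    exact (mul_eq_zero.1 hsum).resolve_left hn
  have hrn : r.natDegree < n := natDegree_modByMonic_X_pow_sub_one_lt hn0 p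
  obtain ⟨U, hU⟩ : ∃ U : F[X], U.comp (C g * X) - U = r := by
    refine exists_comp_C_mul_X_sub_eq fun j hj => hg.pow_ne_one_of_pos_of_lt ?_ ?_
    · rintro rfl
      exact mem_support_iff.1 hj hr0
    · exact (le_natDegree_of_mem_supp j hj).trans_lt hrn
  exact ⟨U, hU ▸ dvd_modByMonic_sub p _⟩
end

section
/- For every polynomial p(X) ∈ F[X] of degree strictly less than n and every z ∈ F, Σ_{x ∈ H} u_H(z, x) · p(x) = p*(z), where p*(X) is the remainder of n · X^{n−1} · p(X) upon division by X^n − 1. -/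
/-!
Both sides are polynomials in `z` of degree `< n`: the right side as a remainder modulo
`X^n - 1`, the left side because `u_H(X, y)` has degree `n - 1` in `X`. So it suffices that
they agree on the `n` points of `H`. At `z = g^m` every term with `k ≠ m` vanishes, since
`(g^m - g^k) u_H(g^m, g^k) = g^{mn} - g^{kn} = 0`, which leaves
`u_H(g^m, g^m) p(g^m) = n g^{m(n-1)} p(g^m)`; and the remainder of `n X^{n-1} p` takes the same
value at the root `g^m` of `X^n - 1`.
-/

open Polynomial

/-- The generalized derivative kernel `u_H(x, y) = ∑_{i=0}^{n-1} x^i · y^(n-1-i)` of the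
vanishing polynomial `Z_H(X) = X^n - 1`. -/
def genDerivKernel {F : Type*} [Field F] (n : ℕ) (x y : F) : F :=
  ∑ i ∈ Finset.range n, x ^ i * y ^ (n - 1 - i)

section genDerivKernel

variable {F : Type*} [Field F]

theorem genDerivKernel_self (n : ℕ) (x : F) : genDerivKernel n x x = n * x ^ (n - 1) := by
  have hterm : ∀ i ∈ Finset.range n, x ^ i * x ^ (n - 1 - i) = x ^ (n - 1) := fun i hi => by
    rw [← pow_add, Nat.add_sub_cancel' (Nat.le_sub_one_of_lt (Finset.mem_range.mp hi))]
  rw [genDerivKernel, Finset.sum_congr rfl hterm, Finset.sum_const, Finset.card_range,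
    nsmul_eq_mul]

theorem genDerivKernel_mul_sub (n : ℕ) (x y : F) :
    genDerivKernel n x y * (x - y) = x ^ n - y ^ n :=
  geom_sum₂_mul x y n

theorem genDerivKernel_eq_zero_of_pow_eq_pow {n : ℕ} {x y : F} (hxy : x ≠ y)
    (h : x ^ n = y ^ n) : genDerivKernel n x y = 0 := by
  have hmul := genDerivKernel_mul_sub n x y
  rw [h, sub_self] at hmul
  exact (mul_eq_zero.mp hmul).resolve_right (sub_ne_zero.mpr hxy)

theorem IsPrimitiveRoot.sum_genDerivKernel_pow_mul {n : ℕ} {g : F} (hg : IsPrimitiveRoot g n)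
    (f : F → F) {m : ℕ} (hm : m < n) :
    ∑ k ∈ Finset.range n, genDerivKernel n (g ^ m) (g ^ k) * f (g ^ k) =
      n * (g ^ m) ^ (n - 1) * f (g ^ m) := by
  rw [Finset.sum_eq_single_of_mem m (Finset.mem_range.mpr hm), genDerivKernel_self]
  intro k hk hkm
  have hne : g ^ m ≠ g ^ k := fun h => hkm (hg.pow_inj (Finset.mem_range.mp hk) hm h.symm)
  have hpow : (g ^ m) ^ n = (g ^ k) ^ n := by
    rw [pow_right_comm, pow_right_comm g k, hg.pow_eq_one, one_pow, one_pow]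
  rw [genDerivKernel_eq_zero_of_pow_eq_pow hne hpow, zero_mul]

end genDerivKernel

noncomputable def genDerivKernelPoly {R : Type*} [CommSemiring R] (n : ℕ) (y : R) : R[X] :=
  ∑ i ∈ Finset.range n, C (y ^ (n - 1 - i)) * X ^ i

theorem genDerivKernelPoly_mem_degreeLT {R : Type*} [CommSemiring R] (n : ℕ) (y : R) :
    genDerivKernelPoly n y ∈ degreeLT R n :=
  Submodule.sum_mem _ fun i hi => by
    rw [← smul_eq_C_mul]
    exact Submodule.smul_mem _ _ (mem_degreeLT.mpr ((degree_X_pow_le i).trans_lt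
      (by exact_mod_cast Finset.mem_range.mp hi)))

theorem eval_genDerivKernelPoly {F : Type*} [Field F] (n : ℕ) (x y : F) :
    (genDerivKernelPoly n y).eval x = genDerivKernel n x y := by
  simp only [genDerivKernelPoly, genDerivKernel, eval_finsetSum, eval_mul, eval_C, eval_pow,
    eval_X, mul_comm]

theorem Polynomial.eval_mod_of_isRoot {F : Type*} [Field F] (p : F[X]) {q : F[X]} {x : F}
    (hx : q.IsRoot x) : (p % q).eval x = p.eval x := by
  rw [EuclideanDomain.mod_eq_sub_mul_div, eval_sub, eval_mul, hx.eq_zero, zero_mul, sub_zero]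

theorem Polynomial.degree_mod_X_pow_sub_one_lt {F : Type*} [Field F] {n : ℕ} (hn : 0 < n)
    (p : F[X]) : (p % (X ^ n - 1)).degree < (n : WithBot ℕ) := by
  have hZ_deg : ((X : F[X]) ^ n - 1).degree = n := by
    simpa using degree_X_pow_sub_C hn (1 : F)
  have hZ_ne : (X : F[X]) ^ n - 1 ≠ 0 := by simpa using X_pow_sub_C_ne_zero hn (1 : F)
  exact hZ_deg ▸ degree_mod_lt p hZ_ne

theorem genDerivKernel_inner_product_general {F : Type*} [Field F] (n : ℕ) (hn0 : 0 < n)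
    (g : F) (hg : IsPrimitiveRoot g n) (p : F[X]) (z : F) :
    ∑ k ∈ Finset.range n, genDerivKernel n z (g ^ k) * p.eval (g ^ k) =
      ((C (n : F) * X ^ (n - 1) * p) % (X ^ n - 1)).eval z := by
  set Q : F[X] := ∑ k ∈ Finset.range n, p.eval (g ^ k) • genDerivKernelPoly n (g ^ k)
  have hQ : ∀ x,
      Q.eval x = ∑ k ∈ Finset.range n, genDerivKernel n x (g ^ k) * p.eval (g ^ k) := fun x => by
    simp only [Q, eval_finsetSum, eval_smul, eval_genDerivKernelPoly, smul_eq_mul, mul_comm]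
  have hQ_deg : Q.degree < n := mem_degreeLT.mp <| Submodule.sum_mem _ fun k _ =>
    Submodule.smul_mem _ _ (genDerivKernelPoly_mem_degreeLT n _)
  have hQ_eq : Q = (C (n : F) * X ^ (n - 1) * p) % (X ^ n - 1) := by
    have hrem_deg := degree_mod_X_pow_sub_one_lt hn0 (C (n : F) * X ^ (n - 1) * p)
    refine eq_of_degrees_lt_of_eval_index_eq (Finset.range n) hg.injOn_pow
      (by rwa [Finset.card_range]) (by rwa [Finset.card_range]) fun m hm => ?_
    have hroot : ((X : F[X]) ^ n - 1).IsRoot (g ^ m) := by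
      simp only [IsRoot, eval_sub, eval_pow, eval_X, eval_one, pow_right_comm, hg.pow_eq_one,
        one_pow, sub_self]
    rw [hQ, hg.sum_genDerivKernel_pow_mul (p.eval ·) (Finset.mem_range.mp hm),
      eval_mod_of_isRoot _ hroot]
    simp only [eval_mul, eval_C, eval_pow, eval_X]
  rw [← hQ_eq, hQ]

/-- For every polynomial `p(X)` of degree strictly less than `n` and every `z ∈ F`,
`∑_{x ∈ H} u_H(z, x) · p(x) = p*(z)`, where `p*(X)` is the remainder of
`n · X^(n-1) · p(X)` upon division by `X^n - 1` (note `u_H(X,X) = n·X^(n-1)`).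
Here `H = {g^0, …, g^(n-1)}` for a primitive `n`-th root of unity `g` in a field `F`
in which `n` is nonzero. -/
theorem genDerivKernel_inner_product {F : Type*} [Field F] (n : ℕ) (hn0 : 0 < n)
    (hn : (n : F) ≠ 0) (g : F) (hg : IsPrimitiveRoot g n) (p : F[X])
    (hp : p.degree < n) (z : F) :
    ∑ k ∈ Finset.range n, genDerivKernel n z (g ^ k) * p.eval (g ^ k) =
      ((C (n : F) * X ^ (n - 1) * p) % (X ^ n - 1)).eval z :=
  genDerivKernel_inner_product_general n hn0 g hg p z
end

section
/- Let A, B, C be n×n matrices over F. A vector y ∈ F^n satisfies the rank-one constraint system (A·y) ⊙ (B·y) = C·y (with ⊙ the entry-wise product) if and only if its Lagrange encoding ŷ(X) satisfies y_A(X) · y_B(X) ≡ Σ_{z ∈ H} C(X, z) · ŷ(z) (mod X^n − 1), where y_A(X) = Σ_{z ∈ H} A(X, z) · ŷ(z) and y_B(X) = Σ_{z ∈ H} B(X, z) · ŷ(z). -/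
open Polynomial

/-- The Lagrange kernel `L_n(x, y) = (1/n)·(1 + ∑_{i=1}^{n-1} x^i · y^(n-i))` as a scalar. -/
noncomputable def lagrangeKernel {F : Type*} [Field F] (n : ℕ) (x y : F) : F :=
  (n : F)⁻¹ * (1 + ∑ i ∈ Finset.Ico 1 n, x ^ i * y ^ (n - i))

/-- The univariate polynomial `L_n(X, y) = (1/n)·(1 + ∑_{i=1}^{n-1} X^i · y^(n-i))`. -/
noncomputable def lagrangeKernelPoly {F : Type*} [Field F] (n : ℕ) (y : F) : F[X] :=
  C (n : F)⁻¹ * (1 + ∑ i ∈ Finset.Ico 1 n, X ^ i * C (y ^ (n - i)))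

/-- The Lagrange encoding `ŷ(X) = ∑_{k} y_k · L_n(X, g^k)` of a vector `y ∈ F^n`. -/
noncomputable def lagrangeEncode {F : Type*} [Field F] (n : ℕ) (g : F) (y : Fin n → F) :
    F[X] :=
  ∑ k : Fin n, C (y k) * lagrangeKernelPoly n (g ^ (k : ℕ))

/-- The bivariate encoding `M(X, Y) = ∑_{i,j} M_{i,j}·L_n(X, g^i)·L_n(Y, g^j)` of an
`n×n` matrix, with the second variable evaluated at `z ∈ F`. -/
noncomputable def matrixEncodeSnd {F : Type*} [Field F] (n : ℕ) (g : F)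
    (M : Matrix (Fin n) (Fin n) F) (z : F) : F[X] :=
  ∑ i : Fin n, ∑ j : Fin n,
    C (M i j) * lagrangeKernelPoly n (g ^ (i : ℕ)) * C (lagrangeKernel n z (g ^ (j : ℕ)))

/-- `∑_{z ∈ H} M(X, z) · ŷ(z)`, for `H = {g^0, …, g^(n-1)}`. -/
noncomputable def linSum {F : Type*} [Field F] (n : ℕ) (g : F)
    (M : Matrix (Fin n) (Fin n) F) (y : Fin n → F) : F[X] :=
  ∑ k ∈ Finset.range n,
    matrixEncodeSnd n g M (g ^ k) * C ((lagrangeEncode n g y).eval (g ^ k))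

open scoped Classical in
/-- The Lagrange kernel is a delta function on powers of a primitive root. -/
lemma lagrangeKernel_pow_eq_ite {F : Type*} [Field F] {n : ℕ} (hn0 : 0 < n) (hn : (n:F) ≠ 0)
    {g : F} (hg : IsPrimitiveRoot g n) (a b : ℕ) :
    lagrangeKernel n (g^a) (g^b) = if g^a = g^b then 1 else 0 := by
  classical
  have hg0 : g ≠ 0 := fun h => by
    have := hg.pow_eq_one; rw [h, zero_pow hn0.ne'] at this; exact zero_ne_one this
  have hbn : (g^b)^n = 1 := by rw [← pow_mul, mul_comm, pow_mul, hg.pow_eq_one, one_pow]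
  have han : (g^a)^n = 1 := by rw [← pow_mul, mul_comm, pow_mul, hg.pow_eq_one, one_pow]
  set w := g^a * (g^b)⁻¹ with hw
  have hkey : lagrangeKernel n (g^a) (g^b) = (n:F)⁻¹ * ∑ i ∈ Finset.range n, w ^ i := by
    unfold lagrangeKernel
    congr 1
    rw [Finset.range_eq_Ico, Finset.sum_eq_sum_Ico_succ_bot hn0]
    simp only [pow_zero, one_mul, Nat.sub_zero, hbn]
    congr 1
    refine Finset.sum_congr rfl fun i hi => ?_
    rw [Finset.mem_Ico] at hi
    have hinv : (g^b)^(n-i) = ((g^b)^i)⁻¹ := by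
      refine eq_inv_of_mul_eq_one_left ?_
      rw [← pow_add, Nat.sub_add_cancel hi.2.le, hbn]
    rw [hw, mul_pow, inv_pow, hinv]
  rw [hkey]
  by_cases h : g^a = g^b
  · rw [if_pos h]
    have : w = 1 := by rw [hw, h, mul_inv_cancel₀ (pow_ne_zero _ hg0)]
    simp [this, inv_mul_cancel₀ hn]
  · rw [if_neg h]
    have hw1 : w ≠ 1 := by
      rw [hw, Ne, mul_inv_eq_one₀ (pow_ne_zero _ hg0)]; exact h
    rw [geom_sum_eq hw1]
    have hwn : w ^ n = 1 := by rw [hw, mul_pow, inv_pow, han, hbn]; simp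
    rw [hwn, sub_self, zero_div, mul_zero]

open scoped Classical in
lemma lagrangeKernel_pow_eq_ite' {F : Type*} [Field F] {n : ℕ} (hn0 : 0 < n) (hn : (n:F) ≠ 0)
    {g : F} (hg : IsPrimitiveRoot g n) (a b : Fin n) :
    lagrangeKernel n (g^(a:ℕ)) (g^(b:ℕ)) = if a = b then 1 else 0 := by
  rw [lagrangeKernel_pow_eq_ite hn0 hn hg]
  refine if_congr ⟨fun h => ?_, fun h => by rw [h]⟩ rfl rfl
  exact Fin.ext (hg.pow_inj a.isLt b.isLt h)

lemma lagrangeKernelPoly_eval {F : Type*} [Field F] (n : ℕ) (y x : F) :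
    (lagrangeKernelPoly n y).eval x = lagrangeKernel n x y := by
  simp [lagrangeKernelPoly, lagrangeKernel, eval_finset_sum]

lemma lagrangeEncode_eval {F : Type*} [Field F] {n : ℕ} (hn0 : 0 < n) (hn : (n:F) ≠ 0)
    {g : F} (hg : IsPrimitiveRoot g n) (y : Fin n → F) (k : Fin n) :
    (lagrangeEncode n g y).eval (g ^ (k : ℕ)) = y k := by
  classical
  unfold lagrangeEncode
  rw [eval_finset_sum]
  simp only [eval_mul, eval_C, lagrangeKernelPoly_eval,
    lagrangeKernel_pow_eq_ite' hn0 hn hg k]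
  simp

lemma linSum_eq_encode {F : Type*} [Field F] {n : ℕ} (hn0 : 0 < n) (hn : (n:F) ≠ 0)
    {g : F} (hg : IsPrimitiveRoot g n) (M : Matrix (Fin n) (Fin n) F) (y : Fin n → F) :
    linSum n g M y = lagrangeEncode n g (M.mulVec y) := by
  classical
  unfold linSum
  rw [Finset.sum_range (fun k => matrixEncodeSnd n g M (g ^ k) *
      C ((lagrangeEncode n g y).eval (g ^ k)))]
  have hM : ∀ k : Fin n, matrixEncodeSnd n g M (g ^ (k:ℕ)) =
      ∑ i : Fin n, C (M i k) * lagrangeKernelPoly n (g ^ (i:ℕ)) := by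
    intro k
    unfold matrixEncodeSnd
    refine Finset.sum_congr rfl fun i _ => ?_
    have : ∀ j : Fin n, C (M i j) * lagrangeKernelPoly n (g ^ (i:ℕ)) *
        C (lagrangeKernel n (g^(k:ℕ)) (g ^ (j:ℕ))) =
        if k = j then C (M i j) * lagrangeKernelPoly n (g ^ (i:ℕ)) else 0 := by
      intro j
      rw [lagrangeKernel_pow_eq_ite' hn0 hn hg k j]
      split <;> simp
    rw [Finset.sum_congr rfl fun j _ => this j, Finset.sum_ite_eq]
    simp
  calc ∑ k : Fin n, matrixEncodeSnd n g M (g ^ (k:ℕ)) *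
        C ((lagrangeEncode n g y).eval (g ^ (k:ℕ)))
      = ∑ k : Fin n, ∑ i : Fin n,
          C (M i k * y k) * lagrangeKernelPoly n (g ^ (i:ℕ)) := by
        refine Finset.sum_congr rfl fun k _ => ?_
        rw [hM k, lagrangeEncode_eval hn0 hn hg y k, Finset.sum_mul]
        refine Finset.sum_congr rfl fun i _ => ?_
        rw [map_mul]; ring
    _ = lagrangeEncode n g (M.mulVec y) := by
        rw [Finset.sum_comm]
        unfold lagrangeEncode
        refine Finset.sum_congr rfl fun i _ => ?_
        rw [← Finset.sum_mul, ← map_sum]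
        rfl

lemma pow_pow_n {F : Type*} [Field F] {n : ℕ} {g : F} (hg : IsPrimitiveRoot g n) (k : ℕ) :
    (g ^ k) ^ n = 1 := by
  rw [← pow_mul, mul_comm, pow_mul, hg.pow_eq_one, one_pow]

lemma X_pow_sub_one_eq_prod_fin {F : Type*} [Field F] {n : ℕ} (hn0 : 0 < n)
    {g : F} (hg : IsPrimitiveRoot g n) :
    (X ^ n - 1 : F[X]) = ∏ k : Fin n, (X - C (g ^ (k:ℕ))) := by
  have hinj : Function.Injective (fun k : Fin n => g ^ (k:ℕ)) := by
    intro a b h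
    exact Fin.ext (hg.pow_inj a.isLt b.isLt h)
  have hmonicP : ((∏ k : Fin n, (X - C (g ^ (k:ℕ)))) : F[X]).Monic :=
    monic_prod_of_monic _ _ fun k _ => monic_X_sub_C _
  have hmonic : ((X : F[X]) ^ n - 1).Monic := by
    simpa using monic_X_pow_sub_C (1 : F) hn0.ne'
  have hdvd : (∏ k : Fin n, (X - C (g ^ (k:ℕ)))) ∣ (X ^ n - 1 : F[X]) := by
    refine Fintype.prod_dvd_of_coprime (pairwise_coprime_X_sub_C hinj) fun k => ?_
    rw [dvd_iff_isRoot]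
    simp [IsRoot, pow_pow_n hg]
  have hdeg : ((X : F[X]) ^ n - 1).natDegree ≤
      ((∏ k : Fin n, (X - C (g ^ (k:ℕ)))) : F[X]).natDegree := by
    have h1 : ((X : F[X]) ^ n - 1).natDegree = n := by
      simpa using natDegree_X_pow_sub_C (n := n) (r := (1 : F))
    rw [natDegree_prod _ _ fun k _ => (monic_X_sub_C _).ne_zero, h1]
    simp only [natDegree_X_sub_C, Finset.sum_const, Finset.card_univ, Fintype.card_fin, smul_eq_mul, mul_one, le_refl]
  exact eq_of_monic_of_dvd_of_natDegree_le hmonicP hmonic hdvd hdeg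

/-- **Polynomial formulation of R1CS satisfiability.**
A vector `y` satisfies the rank-one constraint system `(A·y) ⊙ (B·y) = C·y` iff its
Lagrange encoding `ŷ` satisfies
`y_A(X)·y_B(X) ≡ ∑_{z ∈ H} C(X, z)·ŷ(z)  (mod X^n - 1)`,
where `y_A(X) = ∑_{z ∈ H} A(X, z)·ŷ(z)` and `y_B(X) = ∑_{z ∈ H} B(X, z)·ŷ(z)`.
Here `H = {g^0, …, g^(n-1)}` for a primitive `n`-th root of unity `g` in a field `F` in
which `n` is nonzero. -/
theorem r1cs_iff_polynomial_identity {F : Type*} [Field F] (n : ℕ) (hn0 : 0 < n)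
    (hn : (n : F) ≠ 0) (g : F) (hg : IsPrimitiveRoot g n)
    (A B Cm : Matrix (Fin n) (Fin n) F) (y : Fin n → F) :
    (∀ k : Fin n, (A.mulVec y) k * (B.mulVec y) k = (Cm.mulVec y) k) ↔
      (X ^ n - 1 : F[X]) ∣
        (linSum n g A y * linSum n g B y - linSum n g Cm y) := by
  rw [linSum_eq_encode hn0 hn hg A y, linSum_eq_encode hn0 hn hg B y,
    linSum_eq_encode hn0 hn hg Cm y]
  set p : F[X] := lagrangeEncode n g (A.mulVec y) * lagrangeEncode n g (B.mulVec y) -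
    lagrangeEncode n g (Cm.mulVec y) with hp
  have hpeval : ∀ k : Fin n, p.eval (g ^ (k:ℕ)) =
      (A.mulVec y) k * (B.mulVec y) k - (Cm.mulVec y) k := by
    intro k
    rw [hp]
    simp [lagrangeEncode_eval hn0 hn hg]
  constructor
  · intro h
    rw [X_pow_sub_one_eq_prod_fin hn0 hg]
    have hinj : Function.Injective (fun k : Fin n => g ^ (k:ℕ)) := fun a b hab =>
      Fin.ext (hg.pow_inj a.isLt b.isLt hab)
    refine Fintype.prod_dvd_of_coprime (pairwise_coprime_X_sub_C hinj) fun k => ?_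
    rw [dvd_iff_isRoot]
    show p.eval _ = 0
    rw [hpeval k, h k, sub_self]
  · rintro ⟨q, hq⟩ k
    have : p.eval (g ^ (k:ℕ)) = 0 := by
      rw [hq]
      simp [pow_pow_n hg]
    rw [hpeval k] at this
    exact sub_eq_zero.mp this
end

section
/- Let K be a finite index set and let val : K → F and row, col : K → H be functions, and define the bivariate polynomial M(X, Y) = Σ_{w ∈ K} val(w) · L_n(X, row(w)) · L_n(Y, col(w)). Then for all α, β ∈ F with α^n ≠ 1 and β^n ≠ 1 (so in particular α, β ∉ H), M(α, β) = ((α^n − 1)·(β^n − 1)/n²) · Σ_{w ∈ K} val(w)·row(w)·col(w) / ((α − row(w))·(β − col(w))). -/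
open Polynomial

open Finset

/-! At an `n`-th root of unity `z`, the bracket `1 + ∑_{0<i<n} x^i z^(n-i)` of the Lagrange kernel
is `z` times the homogeneous geometric sum `∑_{i<n} x^i z^(n-1-i)` (the `i = 0` term is `z^n = 1`),
so multiplying by `x - z` gives `(x^n - z^n) z = (x^n - 1) z`. Dividing by `n (α - z)` evaluates each
kernel in closed form, and the theorem follows termwise. -/

theorem sum_range_mul_pow_sub_eq_one_add_of_pow_eq_one {R : Type*} [CommRing R] {n : ℕ}
    (hn : 0 < n) {z : R} (hz : z ^ n = 1) (x : R) :
    ∑ i ∈ range n, x ^ i * z ^ (n - i) = 1 + ∑ i ∈ Ico 1 n, x ^ i * z ^ (n - i) := by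
  rw [range_eq_Ico, sum_eq_sum_Ico_succ_bot hn]
  simp [hz]

theorem sum_range_mul_pow_sub_eq_mul_geom_sum₂ {R : Type*} [CommRing R] (n : ℕ) (x z : R) :
    ∑ i ∈ range n, x ^ i * z ^ (n - i) = z * ∑ i ∈ range n, x ^ i * z ^ (n - 1 - i) := by
  rw [mul_sum]
  refine sum_congr rfl fun i hi => ?_
  rw [show n - i = n - 1 - i + 1 by have := mem_range.mp hi; omega, pow_succ]
  ring

theorem one_add_sum_Ico_mul_pow_mul_sub {R : Type*} [CommRing R] {n : ℕ} (hn : 0 < n)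
    {z : R} (hz : z ^ n = 1) (x : R) :
    (1 + ∑ i ∈ Ico 1 n, x ^ i * z ^ (n - i)) * (x - z) = (x ^ n - 1) * z := by
  rw [← sum_range_mul_pow_sub_eq_one_add_of_pow_eq_one hn hz,
    sum_range_mul_pow_sub_eq_mul_geom_sum₂, mul_assoc, geom_sum₂_mul, hz, mul_comm]

theorem lagrangeKernel_of_pow_eq_one {F : Type*} [Field F] {n : ℕ} {α z : F}
    (hz : z ^ n = 1) (hα : α ^ n ≠ 1) :
    lagrangeKernel n α z = (α ^ n - 1) / n * (z / (α - z)) := by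
  have hn : 0 < n := Nat.pos_of_ne_zero fun h => hα (h ▸ pow_zero α)
  have hαz : α - z ≠ 0 := sub_ne_zero.mpr fun h => hα (h ▸ hz)
  rw [lagrangeKernel, div_mul_div_comm, mul_comm (n : F), ← div_div, div_eq_inv_mul]
  congr 1
  exact eq_div_of_mul_eq hαz (one_add_sum_Ico_mul_pow_mul_sub hn hz α)

theorem sparse_matrix_encoding_sumcheck_general {F : Type*} [Field F] (n : ℕ)
    {ι : Type*} (K : Finset ι) (val : ι → F) (row col : ι → F)
    (hrow : ∀ w ∈ K, row w ^ n = 1) (hcol : ∀ w ∈ K, col w ^ n = 1)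
    (α β : F) (hα : α ^ n ≠ 1) (hβ : β ^ n ≠ 1) :
    ∑ w ∈ K, val w * lagrangeKernel n α (row w) * lagrangeKernel n β (col w) =
      (α ^ n - 1) * (β ^ n - 1) / (n : F) ^ 2 *
        ∑ w ∈ K, val w * row w * col w / ((α - row w) * (β - col w)) := by
  rw [mul_sum]
  refine sum_congr rfl fun w hw => ?_
  rw [lagrangeKernel_of_pow_eq_one (hrow w hw) hα, lagrangeKernel_of_pow_eq_one (hcol w hw) hβ]
  simp only [div_eq_mul_inv, mul_inv]
  ring

/-- **Sumcheck representation of the sparse bivariate matrix encoding.**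
Let `K` be a finite index set and `val : K → F`, `row, col : K → H` (i.e. their values
are `n`-th roots of unity), and set `M(X, Y) = ∑_{w ∈ K} val(w)·L_n(X, row(w))·L_n(Y, col(w))`.
Then for all `α, β ∈ F` with `α^n ≠ 1` and `β^n ≠ 1`,
`M(α, β) = ((α^n - 1)(β^n - 1)/n²) · ∑_{w ∈ K} val(w)·row(w)·col(w)/((α - row(w))(β - col(w)))`.
Here `F` is a field in which `n` is nonzero. -/
theorem sparse_matrix_encoding_sumcheck {F : Type*} [Field F] (n : ℕ) (hn0 : 0 < n)
    (hn : (n : F) ≠ 0) {ι : Type*} (K : Finset ι) (val : ι → F) (row col : ι → F)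
    (hrow : ∀ w ∈ K, row w ^ n = 1) (hcol : ∀ w ∈ K, col w ^ n = 1)
    (α β : F) (hα : α ^ n ≠ 1) (hβ : β ^ n ≠ 1) :
    ∑ w ∈ K, val w * lagrangeKernel n α (row w) * lagrangeKernel n β (col w) =
      (α ^ n - 1) * (β ^ n - 1) / (n : F) ^ 2 *
        ∑ w ∈ K, val w * row w * col w / ((α - row w) * (β - col w)) :=
  sparse_matrix_encoding_sumcheck_general n K val row col hrow hcol α β hα hβ
end

section
/- Let t(X, Y) ∈ F[X, Y] be a bivariate polynomial of degree strictly less than n in each of the two variables, let q(X) ∈ F[X] have degree strictly less than n, and let v : H → F be any function. Then q(x) = Σ_{z ∈ H} t(x, z) · v(z) holds for every x ∈ H if and only if Σ_{z ∈ H} ( t(α, z) · v(z) − L_n(z, α) · q(z) ) = 0 holds for every α ∈ F. -/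
open Polynomial

lemma sum_pow_root_aux {F : Type*} [Field F] {n : ℕ} {g : F}
    (hg : IsPrimitiveRoot g n) (d : ℕ) :
    ∑ k ∈ Finset.range n, (g ^ k) ^ d = if n ∣ d then (n : F) else 0 := by
  have hpow : ∀ k, (g ^ k) ^ d = (g ^ d) ^ k := fun k => by
    rw [← pow_mul, ← pow_mul, Nat.mul_comm]
  simp_rw [hpow]
  by_cases h : n ∣ d
  · rw [if_pos h]
    have : g ^ d = 1 := (hg.pow_eq_one_iff_dvd d).mpr h
    simp [this]
  · rw [if_neg h]
    have hne : g ^ d ≠ 1 := fun he => h ((hg.pow_eq_one_iff_dvd d).mp he)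
    have h1 : (g ^ d) ^ n = 1 := by
      rw [← pow_mul, mul_comm, pow_mul, hg.pow_eq_one, one_pow]
    have h2 := geom_sum_mul (g ^ d) n
    rw [h1, sub_self] at h2
    rcases mul_eq_zero.mp h2 with h3 | h3
    · exact h3
    · exact absurd (sub_eq_zero.mp h3) hne

lemma kernel_sum_pow {F : Type*} [Field F] {n : ℕ} (hn0 : 0 < n) (hn : (n : F) ≠ 0)
    {g : F} (hg : IsPrimitiveRoot g n) (α : F) {m : ℕ} (hm : m < n) :
    ∑ k ∈ Finset.range n, lagrangeKernel n (g ^ k) α * (g ^ k) ^ m = α ^ m := by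
  unfold lagrangeKernel
  have expand : ∀ k ∈ Finset.range n,
      (n : F)⁻¹ * (1 + ∑ i ∈ Finset.Ico 1 n, (g ^ k) ^ i * α ^ (n - i)) * (g ^ k) ^ m
      = (n : F)⁻¹ * ((g ^ k) ^ m
          + ∑ i ∈ Finset.Ico 1 n, α ^ (n - i) * (g ^ k) ^ (i + m)) := by
    intro k _
    rw [mul_assoc]
    congr 1
    rw [add_mul, one_mul, Finset.sum_mul]
    congr 1
    refine Finset.sum_congr rfl fun i _ => ?_
    rw [pow_add]; ring
  rw [Finset.sum_congr rfl expand, ← Finset.mul_sum, Finset.sum_add_distrib]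
  rw [Finset.sum_comm]
  have h1 : ∑ k ∈ Finset.range n, (g ^ k) ^ m = if n ∣ m then (n : F) else 0 :=
    sum_pow_root_aux hg m
  have h2 : ∀ i ∈ Finset.Ico 1 n,
      ∑ k ∈ Finset.range n, α ^ (n - i) * (g ^ k) ^ (i + m)
      = α ^ (n - i) * (if n ∣ (i + m) then (n : F) else 0) := by
    intro i _
    rw [← Finset.mul_sum, sum_pow_root_aux hg]
  rw [Finset.sum_congr rfl h2, h1]
  rcases Nat.eq_zero_or_pos m with rfl | hm1
  · rw [if_pos (dvd_zero n)]
    have : ∀ i ∈ Finset.Ico 1 n,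
        α ^ (n - i) * (if n ∣ (i + 0) then (n : F) else 0) = 0 := by
      intro i hi
      rw [Finset.mem_Ico] at hi
      rw [if_neg, mul_zero]
      intro hdvd
      have := Nat.le_of_dvd (by omega) hdvd
      omega
    rw [Finset.sum_congr rfl this, Finset.sum_const_zero, add_zero, pow_zero,
      inv_mul_cancel₀ hn]
  · have hm' : ¬ n ∣ m := fun hdvd => by have := Nat.le_of_dvd hm1 hdvd; omega
    rw [if_neg hm', zero_add]
    rw [Finset.sum_eq_single_of_mem (n - m)
      (Finset.mem_Ico.mpr ⟨by omega, by omega⟩)]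
    · have : n - (n - m) = m := by omega
      rw [if_pos (by rw [Nat.sub_add_cancel hm.le]), this]
      field_simp
    · intro i hi hine
      rw [Finset.mem_Ico] at hi
      rw [if_neg, mul_zero]
      intro hdvd
      have h1 : n ≤ i + m := Nat.le_of_dvd (by omega) hdvd
      have h2 : i + m - n = 0 :=
        Nat.eq_zero_of_dvd_of_lt (Nat.dvd_sub hdvd dvd_rfl) (by omega)
      exact hine (by omega)

lemma kernel_interp {F : Type*} [Field F] {n : ℕ} (hn0 : 0 < n) (hn : (n : F) ≠ 0)
    {g : F} (hg : IsPrimitiveRoot g n) (q : F[X]) (hq : q.degree < n) (α : F) :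
    ∑ k ∈ Finset.range n, lagrangeKernel n (g ^ k) α * q.eval (g ^ k) = q.eval α := by
  have hnd : q.natDegree < n := by
    by_cases h0 : q = 0
    · simpa [h0] using hn0
    · exact (natDegree_lt_iff_degree_lt h0).mpr (by exact_mod_cast hq)
  have heval : ∀ x : F, q.eval x = ∑ m ∈ Finset.range n, q.coeff m * x ^ m :=
    fun x => eval_eq_sum_range' hnd x
  rw [heval α]
  calc ∑ k ∈ Finset.range n, lagrangeKernel n (g ^ k) α * q.eval (g ^ k)
      = ∑ k ∈ Finset.range n, ∑ m ∈ Finset.range n,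
          q.coeff m * (lagrangeKernel n (g ^ k) α * (g ^ k) ^ m) := by
        refine Finset.sum_congr rfl fun k _ => ?_
        rw [heval (g ^ k), Finset.mul_sum]
        exact Finset.sum_congr rfl fun m _ => by ring
    _ = ∑ m ∈ Finset.range n, q.coeff m *
          ∑ k ∈ Finset.range n, lagrangeKernel n (g ^ k) α * (g ^ k) ^ m := by
        rw [Finset.sum_comm]; simp_rw [Finset.mul_sum]
    _ = ∑ m ∈ Finset.range n, q.coeff m * α ^ m := by
        refine Finset.sum_congr rfl fun m hm => ?_
        rw [kernel_sum_pow hn0 hn hg α (Finset.mem_range.mp hm)]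

/-- **Reduction of the lincheck to a sumcheck via the Lagrange kernel.**
Let `t(X, Y) = ∑_{i,j < n} t_{i,j} X^i Y^j` be a bivariate polynomial of degree `< n` in
each variable, `q(X)` a polynomial of degree `< n`, and `v` any function on `H`. Then
`q(x) = ∑_{z ∈ H} t(x, z)·v(z)` holds for every `x ∈ H` iff
`∑_{z ∈ H} (t(α, z)·v(z) - L_n(z, α)·q(z)) = 0` holds for every `α ∈ F`.
Here `H = {g^0, …, g^(n-1)}` for a primitive `n`-th root of unity `g` in a field `F` in
which `n` is nonzero. -/
theorem lincheck_iff_sumcheck {F : Type*} [Field F] (n : ℕ) (hn0 : 0 < n)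
    (hn : (n : F) ≠ 0) (g : F) (hg : IsPrimitiveRoot g n)
    (t : Fin n → Fin n → F) (q : F[X]) (hq : q.degree < n) (v : F → F) :
    (∀ x : F, x ^ n = 1 →
        q.eval x = ∑ k ∈ Finset.range n,
          (∑ i : Fin n, ∑ j : Fin n, t i j * x ^ (i : ℕ) * (g ^ k) ^ (j : ℕ)) * v (g ^ k)) ↔
      (∀ α : F, ∑ k ∈ Finset.range n,
          ((∑ i : Fin n, ∑ j : Fin n, t i j * α ^ (i : ℕ) * (g ^ k) ^ (j : ℕ)) * v (g ^ k)
            - lagrangeKernel n (g ^ k) α * q.eval (g ^ k)) = 0) := by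
  have hsimp : ∀ α : F,
      (∑ k ∈ Finset.range n,
        ((∑ i : Fin n, ∑ j : Fin n, t i j * α ^ (i : ℕ) * (g ^ k) ^ (j : ℕ)) * v (g ^ k)
          - lagrangeKernel n (g ^ k) α * q.eval (g ^ k)) = 0)
      ↔ (∑ k ∈ Finset.range n,
          (∑ i : Fin n, ∑ j : Fin n, t i j * α ^ (i : ℕ) * (g ^ k) ^ (j : ℕ)) * v (g ^ k)
          = q.eval α) := by
    intro α
    rw [Finset.sum_sub_distrib, kernel_interp hn0 hn hg q hq α, sub_eq_zero]
  simp only [hsimp]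
  constructor
  · intro h α
    set P : F[X] := ∑ i : Fin n,
      C (∑ k ∈ Finset.range n, (∑ j : Fin n, t i j * (g ^ k) ^ (j : ℕ)) * v (g ^ k))
        * X ^ (i : ℕ) with hP
    have hPeval : ∀ β : F, P.eval β = ∑ k ∈ Finset.range n,
        (∑ i : Fin n, ∑ j : Fin n, t i j * β ^ (i : ℕ) * (g ^ k) ^ (j : ℕ)) * v (g ^ k) := by
      intro β
      rw [hP]
      simp only [eval_finset_sum, eval_mul, eval_C, eval_pow, eval_X]
      simp_rw [Finset.sum_mul]
      rw [Finset.sum_comm]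
      exact Finset.sum_congr rfl fun k _ => Finset.sum_congr rfl fun i _ =>
        Finset.sum_congr rfl fun j _ => by ring
    have hPdeg : P.natDegree < n := by
      refine Nat.lt_of_le_of_lt (Polynomial.natDegree_sum_le_of_forall_le _ _
        (fun i _ => ?_)) (Nat.sub_lt hn0 one_pos)
      calc (C (∑ k ∈ Finset.range n, (∑ j : Fin n, t i j * (g ^ k) ^ (j : ℕ)) * v (g ^ k))
            * X ^ (i : ℕ)).natDegree ≤ (X ^ (i : ℕ) : F[X]).natDegree :=
              natDegree_C_mul_le _ _
        _ ≤ n - 1 := by rw [natDegree_X_pow]; omega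
    have hqdeg : q.natDegree < n := by
      by_cases h0 : q = 0
      · simpa [h0] using hn0
      · exact (natDegree_lt_iff_degree_lt h0).mpr (by exact_mod_cast hq)
    have hzero : P - q = 0 := by
      apply Polynomial.eq_zero_of_natDegree_lt_card_of_eval_eq_zero (P - q)
        (f := fun k : Fin n => g ^ (k : ℕ))
      · intro a b hab
        exact Fin.ext (hg.pow_inj a.isLt b.isLt hab)
      · intro k
        rw [eval_sub, hPeval, sub_eq_zero]
        exact (h (g ^ (k : ℕ)) (by rw [← pow_mul, mul_comm, pow_mul, hg.pow_eq_one, one_pow])).symm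
      · calc (P - q).natDegree ≤ max P.natDegree q.natDegree := natDegree_sub_le _ _
          _ < n := max_lt hPdeg hqdeg
          _ = Fintype.card (Fin n) := (Fintype.card_fin n).symm
    rw [← hPeval α, ← sub_eq_zero, ← eval_sub, hzero, eval_zero]
  · intro h x hx
    exact (h x).symm
end

section
/- Let x_1, …, x_m ∈ F be pairwise distinct, z(X) = Π_{j=1}^m (X − x_j), z_i(X) = Π_{j ≠ i}(X − x_j), let p_1(X), …, p_m(X) ∈ F[X] be polynomials and y_1, …, y_m ∈ F. Then for every nonzero ρ ∈ F, the polynomial z(X) divides Σ_{i=1}^m ρ^{i−1} · (p_i(X) − y_i) · z_i(X) if and only if p_i(x_i) = y_i for all i = 1, …, m. -/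
open Polynomial

/-- **Batching multi-point opening claims.**
Let `x_1, …, x_m ∈ F` be pairwise distinct, `z(X) = ∏_j (X - x_j)` and
`z_i(X) = ∏_{j ≠ i} (X - x_j)`, let `p_1, …, p_m` be polynomials and `y_1, …, y_m ∈ F`.
Then for every nonzero `ρ ∈ F`, `z(X)` divides
`∑_i ρ^(i-1)·(p_i(X) - y_i)·z_i(X)` iff `p_i(x_i) = y_i` for all `i`. -/
theorem batched_vanishing_dvd_iff_eval_eq {F : Type*} [Field F] (m : ℕ) (hm : 0 < m)
    (x : Fin m → F) (hx : Function.Injective x) (p : Fin m → F[X]) (y : Fin m → F)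
    (ρ : F) (hρ : ρ ≠ 0) :
    (∏ j : Fin m, (X - C (x j))) ∣
        (∑ i : Fin m, C (ρ ^ (i : ℕ)) * (p i - C (y i)) *
          ∏ j ∈ Finset.univ.erase i, (X - C (x j))) ↔
      ∀ i : Fin m, (p i).eval (x i) = y i := by
  set S : F[X] := ∑ i : Fin m, C (ρ ^ (i : ℕ)) * (p i - C (y i)) *
      ∏ j ∈ Finset.univ.erase i, (X - C (x j)) with hS
  have keval : ∀ k : Fin m, S.eval (x k) =
      ρ ^ (k : ℕ) * ((p k).eval (x k) - y k) *
        ∏ j ∈ Finset.univ.erase k, (x k - x j) := by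
    intro k
    rw [hS, eval_finset_sum]
    rw [Finset.sum_eq_single k]
    · simp [eval_prod]
    · intro i _ hik
      have : (∏ j ∈ Finset.univ.erase i, (X - C (x j))).eval (x k) = 0 := by
        rw [eval_prod]
        apply Finset.prod_eq_zero (Finset.mem_erase.mpr ⟨hik.symm, Finset.mem_univ k⟩)
        simp
      simp [this]
    · simp
  have hprodne : ∀ k : Fin m, (∏ j ∈ Finset.univ.erase k, (x k - x j)) ≠ 0 := by
    intro k
    apply Finset.prod_ne_zero_iff.mpr
    intro j hj
    exact sub_ne_zero_of_ne fun h => (Finset.mem_erase.mp hj).1 (hx h.symm)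
  have hdvd : (∏ j : Fin m, (X - C (x j))) ∣ S ↔ ∀ k : Fin m, S.eval (x k) = 0 := by
    constructor
    · rintro ⟨q, hq⟩ k
      rw [hq, eval_mul, eval_prod]
      rw [Finset.prod_eq_zero (Finset.mem_univ k) (by simp)]
      ring
    · intro h
      apply Fintype.prod_dvd_of_coprime (Polynomial.pairwise_coprime_X_sub_C hx)
      intro k
      exact dvd_iff_isRoot.mpr (h k)
  rw [hdvd]
  constructor
  · intro h k
    have h0 := h k
    rw [keval k] at h0
    have h1 : (p k).eval (x k) - y k = 0 := by
      by_contra hne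
      exact mul_ne_zero (mul_ne_zero (pow_ne_zero _ hρ) hne) (hprodne k) h0
    exact sub_eq_zero.mp h1
  · intro h k
    rw [keval k, h k]
    simp
end

section
/- Let k ≥ 0 and ξ_0, …, ξ_{k−1} ∈ F, and let h(X) = Π_{i=0}^{k−1} (1 − ξ_{k−1−i} · X^{2^i}) be the reduction polynomial. Then for every natural number j with 0 ≤ j < 2^k, the coefficient of X^j in h(X) equals Π_{i ∈ S_j} (−ξ_{k−1−i}), where S_j ⊆ {0, …, k−1} is the set of positions of the 1-bits in the binary expansion j = Σ_{i ∈ S_j} 2^i; and the coefficient of X^j is 0 for j ≥ 2^k. -/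
open Polynomial

lemma testBit_two_pow_add_lt {k i m : ℕ} (hi : i < k) :
    (2 ^ k + m).testBit i = m.testBit i := by
  simp only [Nat.testBit_eq_decide_div_mod_eq]
  have h : 2 ^ k = 2 ^ i * 2 ^ (k - i) := by
    rw [← pow_add, Nat.add_sub_cancel' hi.le]
  rw [h, Nat.mul_add_div (Nat.pos_of_ne_zero (by positivity))]
  have heven : 2 ^ (k - i) % 2 = 0 := by
    have : 2 ^ (k - i) = 2 * 2 ^ (k - i - 1) := by
      rw [← pow_succ']; congr 1; omega
    omega
  have : (2 ^ (k - i) + m / 2 ^ i) % 2 = m / 2 ^ i % 2 := by omega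
  rw [this]

lemma testBit_true_of_le_of_lt {k j : ℕ} (h1 : 2 ^ k ≤ j) (h2 : j < 2 ^ (k + 1)) :
    j.testBit k = true := by
  simp only [Nat.testBit_eq_decide_div_mod_eq]
  have hp : 2 ^ (k + 1) = 2 ^ k + 2 ^ k := by ring
  have : j / 2 ^ k = 1 := by
    apply Nat.div_eq_of_lt_le <;> omega
  simp [this]

lemma aux_coeff {F : Type*} [Field F] (k : ℕ) (c : ℕ → F) (j : ℕ) :
    (∏ i ∈ Finset.range k, (1 - C (c i) * X ^ (2 ^ i) : F[X])).coeff j =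
      if j < 2 ^ k then ∏ i ∈ (Finset.range k).filter (fun i => j.testBit i), (-c i) else 0 := by
  induction k generalizing j with
  | zero =>
    simp only [Finset.range_zero, Finset.prod_empty, Polynomial.coeff_one, pow_zero]
    rcases Nat.eq_zero_or_pos j with rfl | hj
    · simp
    · simp [show j ≠ 0 by omega, show ¬ j < 1 by omega]
  | succ k ih =>
    rw [Finset.prod_range_succ]
    have expand : (∏ i ∈ Finset.range k, (1 - C (c i) * X ^ (2 ^ i) : F[X])) *
        (1 - C (c k) * X ^ (2 ^ k)) =
        (∏ i ∈ Finset.range k, (1 - C (c i) * X ^ (2 ^ i) : F[X])) -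
        C (c k) * ((∏ i ∈ Finset.range k, (1 - C (c i) * X ^ (2 ^ i) : F[X])) * X ^ (2 ^ k)) := by
      ring
    rw [expand, Polynomial.coeff_sub, Polynomial.coeff_C_mul, Polynomial.coeff_mul_X_pow',
      ih j]
    by_cases h1 : j < 2 ^ k
    · have h2 : ¬ 2 ^ k ≤ j := by omega
      have h3 : j < 2 ^ (k + 1) := by
        have : 2 ^ (k + 1) = 2 ^ k + 2 ^ k := by ring
        omega
      simp only [if_pos h1, if_neg h2, if_pos h3, mul_zero, sub_zero]
      rw [Finset.range_add_one, Finset.filter_insert,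
        if_neg (by simp [Nat.testBit_eq_false_of_lt h1])]
    · have h2 : 2 ^ k ≤ j := by omega
      simp only [if_neg h1, if_pos h2, zero_sub, ih (j - 2 ^ k)]
      by_cases h3 : j < 2 ^ (k + 1)
      · have h4 : j - 2 ^ k < 2 ^ k := by
          have : 2 ^ (k + 1) = 2 ^ k + 2 ^ k := by ring
          omega
        simp only [if_pos h4, if_pos h3]
        have hfilter : (Finset.range k).filter (fun i => j.testBit i) =
            (Finset.range k).filter (fun i => (j - 2 ^ k).testBit i) := by
          apply Finset.filter_congr
          intro i hi
          rw [Finset.mem_range] at hi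
          have hj : j = 2 ^ k + (j - 2 ^ k) := by omega
          rw [hj] at *
          simp [testBit_two_pow_add_lt hi]
        rw [Finset.range_add_one, Finset.filter_insert,
          if_pos (testBit_true_of_le_of_lt h2 h3),
          Finset.prod_insert (by simp), hfilter]
        ring
      · have h4 : ¬ j - 2 ^ k < 2 ^ k := by
          have : 2 ^ (k + 1) = 2 ^ k + 2 ^ k := by ring
          omega
        simp [if_neg h4, if_neg h3]

/-- **Coefficients of the dlog reduction polynomial.**
Let `h(X) = ∏_{i=0}^{k-1} (1 - ξ_{k-1-i}·X^(2^i))` be the reduction polynomial of the dlog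
inner product argument. For `j < 2^k`, the coefficient of `X^j` in `h` equals
`∏_{i ∈ S_j} (-ξ_{k-1-i})` where `S_j ⊆ {0, …, k-1}` is the set of positions of the
1-bits of `j` (so `j = ∑_{i ∈ S_j} 2^i`); for `j ≥ 2^k` the coefficient is `0`. -/
theorem reduction_polynomial_coeff {F : Type*} [Field F] (k : ℕ) (ξ : ℕ → F) (j : ℕ) :
    (j < 2 ^ k →
      (∏ i ∈ Finset.range k, (1 - C (ξ (k - 1 - i)) * X ^ (2 ^ i) : F[X])).coeff j =
        ∏ i ∈ (Finset.range k).filter (fun i => j.testBit i), (-ξ (k - 1 - i)))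
    ∧ (2 ^ k ≤ j →
      (∏ i ∈ Finset.range k, (1 - C (ξ (k - 1 - i)) * X ^ (2 ^ i) : F[X])).coeff j = 0) := by
  constructor
  · intro h
    rw [aux_coeff k (fun i => ξ (k - 1 - i)) j, if_pos h]
  · intro h
    rw [aux_coeff k (fun i => ξ (k - 1 - i)) j, if_neg (by omega)]
end
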